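/- Let B be a skew left brace and define γ_b(a) = ((b^{-1}·a^{-1}) ⋆ (b^{-1})^⋆)^{-1}. Then γ_a ∘ γ_b = γ_{b·a} for all a,b ∈ B, i.e. γ : (B,·) → Sym(B) is a group anti-homomorphism. -/

import Mathlib

/-- A skew left brace: a set `B` with two group operations `star` and `mul`
(with their own identities and inverses) satisfying
`a · (b ⋆ c) = (a · b) ⋆ a^⋆ ⋆ (a · c)`. -/
structure SkewLeftBrace (B : Type*) where
  star : B → B → B
  mul : B → B → B
  oneS : B
  oneM : B
  sinv : B → B
  minv : B → B
  star_assoc : ∀ a b c, star (star a b) c = star a (star b c)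
  oneS_star : ∀ a, star oneS a = a
  star_oneS : ∀ a, star a oneS = a
  sinv_star : ∀ a, star (sinv a) a = oneS
  star_sinv : ∀ a, star a (sinv a) = oneS
  mul_assoc : ∀ a b c, mul (mul a b) c = mul a (mul b c)
  oneM_mul : ∀ a, mul oneM a = a
  mul_oneM : ∀ a, mul a oneM = a
  minv_mul : ∀ a, mul (minv a) a = oneM
  mul_minv : ∀ a, mul a (minv a) = oneM
  compat : ∀ a b c, mul a (star b c) = star (mul a b) (star (sinv a) (mul a c))

/-- The lambda map `λ_a(b) = a^⋆ ⋆ (a · b)`. -/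
def lam {B : Type*} (S : SkewLeftBrace B) (a b : B) : B :=
  S.star (S.sinv a) (S.mul a b)

/-- The gamma map `γ_b(a) = ((b⁻¹ · a⁻¹) ⋆ (b⁻¹)^⋆)⁻¹`. -/
def gam {B : Type*} (S : SkewLeftBrace B) (b a : B) : B :=
  S.minv (S.star (S.mul (S.minv b) (S.minv a)) (S.sinv (S.minv b)))

/-- The socle: elements `b` with `λ_b = id` and `a ⋆ b ⋆ a^⋆ = b` for all `a`. -/
def Soc {B : Type*} (S : SkewLeftBrace B) : Set B :=
  {b | (∀ c, lam S b c = c) ∧ ∀ a, S.star (S.star a b) (S.sinv a) = b}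

/-!
Write `σ_c(x) = (c · x) ⋆ c^⋆`, i.e. `λ_c` followed by conjugation by `c` in `(B, ⋆)`.
By definition `γ_b = ⁻¹ ∘ σ_{b⁻¹} ∘ ⁻¹`, so the theorem amounts to `σ_c ∘ σ_d = σ_{c · d}`.
Expanding `c · ((d · x) ⋆ d^⋆)` with the brace relation, this reduces to
`λ_c(d^⋆) ⋆ c^⋆ = (c · d)^⋆`, which is the brace relation applied to `c · (d ⋆ d^⋆) = c`.
-/

namespace SkewLeftBrace

variable {B : Type*} (S : SkewLeftBrace B)

def conjLam (c x : B) : B :=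
  S.star (S.mul c x) (S.sinv c)

theorem minv_unique {z w : B} (h : S.mul z w = S.oneM) : S.minv z = w :=
  calc S.minv z = S.mul (S.minv z) (S.mul z w) := by rw [h, S.mul_oneM]
    _ = w := by rw [← S.mul_assoc, S.minv_mul, S.oneM_mul]

theorem minv_minv (x : B) : S.minv (S.minv x) = x :=
  S.minv_unique (S.minv_mul x)

theorem minv_mul_rev (x y : B) : S.minv (S.mul x y) = S.mul (S.minv y) (S.minv x) := by
  apply minv_unique
  rw [S.mul_assoc, ← S.mul_assoc y, S.mul_minv, S.oneM_mul, S.mul_minv]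

theorem oneS_eq_oneM : S.oneS = S.oneM := by
  have h := S.compat S.oneM S.oneS S.oneS
  rw [S.oneM_mul, S.oneM_mul, S.oneS_star, S.oneS_star, S.star_oneS] at h
  have := S.star_sinv S.oneM
  rw [← h, S.star_oneS] at this
  exact this.symm

theorem mul_oneS (x : B) : S.mul x S.oneS = x := by
  rw [oneS_eq_oneM, S.mul_oneM]

theorem lam_sinv_star_sinv (c d : B) :
    S.star (lam S c (S.sinv d)) (S.sinv c) = S.sinv (S.mul c d) := by
  have h : S.star (S.mul c d) (lam S c (S.sinv d)) = c := by
    rw [lam, ← S.compat, S.star_sinv, mul_oneS]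
  calc S.star (lam S c (S.sinv d)) (S.sinv c)
      = S.star (S.star (S.sinv (S.mul c d)) (S.star (S.mul c d) (lam S c (S.sinv d))))
          (S.sinv c) := by rw [← S.star_assoc, S.sinv_star, S.oneS_star]
    _ = S.sinv (S.mul c d) := by rw [h, S.star_assoc, S.star_sinv, S.star_oneS]

theorem conjLam_conjLam (c d x : B) :
    S.conjLam c (S.conjLam d x) = S.conjLam (S.mul c d) x := by
  rw [conjLam, conjLam, conjLam, S.compat, S.star_assoc, ← S.mul_assoc, ← lam_sinv_star_sinv]
  rfl

theorem gam_eq_minv_conjLam_minv (b x : B) :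
    gam S b x = S.minv (S.conjLam (S.minv b) (S.minv x)) :=
  rfl

end SkewLeftBrace

theorem stmt_5 {B : Type*} (S : SkewLeftBrace B) (a b : B) :
    gam S a ∘ gam S b = gam S (S.mul b a) := by
  funext x
  simp only [Function.comp_apply, S.gam_eq_minv_conjLam_minv, S.minv_minv, S.conjLam_conjLam,
    S.minv_mul_rev]
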